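/- arXiv:2410.13551 — 2 statements merged into one kernel-verified Lean document; each statement's English description precedes it below -/
import Mathlib

section
/- Let n ≥ 1 and let (h_k)_{k=0}^n be a non-decreasing sequence of real numbers and h ≥ h_n. Then the first order branching clustering function Φ on 𝕃₀⁽ⁿ⁾ with parameters (h_k)_{k=0}^n and h is a monotone clustering function: A ≺ B implies Φ(A) ≤ Φ(B) for all A,B ⊆ 𝕃₀⁽ⁿ⁾ with |A| = |B|, and Φ(A∪B) ≤ Φ(A) + Φ(B) for all disjoint A,B ⊆ 𝕃₀⁽ⁿ⁾. -/
open Filter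
open scoped Classical

noncomputable section

namespace PWC

/-- Leaves of the binary tree `𝕋⁽ⁿ⁾` of depth `n`: binary words of length `n`
(coordinate `0` is the first step away from the root). -/
abbrev Leaf (n : ℕ) := Fin n → Bool

/-- The age (distance from the leaves) of the youngest common ancestor `u ∧ v` of two
leaves: `n` minus the length of their longest common prefix. -/
def meetAge {n : ℕ} (u v : Leaf n) : ℕ :=
  if u = v then 0 else n - sInf {i : ℕ | ∃ h : i < n, u ⟨i, h⟩ ≠ v ⟨i, h⟩}

/-- Canonical representative (as a leaf) of the ancestor of `u` at age `k`:
keep the first `n - k` coordinates and pad by `false`. -/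
def trunc {n : ℕ} (k : ℕ) (u : Leaf n) : Leaf n :=
  fun i => if (i : ℕ) < n - k then u i else false

/-- The branching points `ℬ(A) ∩ 𝕃_k` of `A` of age `k`, encoded by the canonical
representatives of the corresponding ancestors. -/
def branchPts {n : ℕ} (A : Finset (Leaf n)) (k : ℕ) : Finset (Leaf n) :=
  ((A ×ˢ A).filter (fun p => meetAge p.1 p.2 = k)).image (fun p => trunc k p.1)

/-- `b_k(A)`: the number of branching points of `A` of age `k`. -/
def bcount {n : ℕ} (A : Finset (Leaf n)) (k : ℕ) : ℕ := (branchPts A k).card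

/-- `b_{k,ℓ}(A)`: the number of branching points of `A` of age `ℓ` whose direct
branching ancestor has age `k`; for `k = n+1` the indicator that the oldest branching
point of `A` has age `ℓ` (i.e. the branching points at age `ℓ` having no strictly older
branching ancestor). -/
def b2count {n : ℕ} (A : Finset (Leaf n)) (k l : ℕ) : ℕ :=
  if k = n + 1 then
    ((branchPts A l).filter (fun w => ∀ j, l < j → j ≤ n → trunc j w ∉ branchPts A j)).card
  else
    ((branchPts A l).filter (fun w => trunc k w ∈ branchPts A k ∧
      ∀ j, l < j → j < k → trunc j w ∉ branchPts A j)).card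

/-- `A ≺ B` : `A` is more clustered than `B`. -/
def MoreClustered {n : ℕ} (A B : Finset (Leaf n)) : Prop :=
  ∃ σ : Leaf n → Leaf n, Set.BijOn σ ↑A ↑B ∧
    ∀ u ∈ A, ∀ v ∈ A, meetAge u v ≤ meetAge (σ u) (σ v)

/-- `A ∼ B` : the subtrees of `𝕋⁽ⁿ⁾` generated by `A` and `B` are graph-isomorphic,
i.e. there is a bijection of the leaf sets preserving all meet ages. -/
def EquivClustered {n : ℕ} (A B : Finset (Leaf n)) : Prop :=
  ∃ σ : Leaf n → Leaf n, Set.BijOn σ ↑A ↑B ∧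
    ∀ u ∈ A, ∀ v ∈ A, meetAge (σ u) (σ v) = meetAge u v

/-- A clustering function: vanishes on `∅` and is invariant under isomorphism of the
generated subtrees. -/
def IsClusteringFn {n : ℕ} (Φ : Finset (Leaf n) → ℝ) : Prop :=
  Φ ∅ = 0 ∧ ∀ A B : Finset (Leaf n), EquivClustered A B → Φ A = Φ B

/-- A monotone clustering function. -/
def IsMonotoneClusteringFn {n : ℕ} (Φ : Finset (Leaf n) → ℝ) : Prop :=
  IsClusteringFn Φ ∧
    (∀ A B : Finset (Leaf n), MoreClustered A B → Φ A ≤ Φ B) ∧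
    (∀ A B : Finset (Leaf n), Disjoint A B → Φ (A ∪ B) ≤ Φ A + Φ B)

/-- The partition function `Z_n^{Φ,J}`. -/
def Z (n : ℕ) (Φ : Finset (Leaf n) → ℝ) (J : ℝ) : ℝ :=
  ∑ A : Finset (Leaf n), Real.exp (J * (A.card : ℝ) - Φ A)

/-- The finite-volume free energy `ζ_n^Φ(J) = 2⁻ⁿ ln Z_n^{Φ,J}`. -/
def zetaN (n : ℕ) (Φ : Finset (Leaf n) → ℝ) (J : ℝ) : ℝ :=
  Real.log (Z n Φ J) / 2 ^ n

/-- The canonical partition function `W_n^Φ(a₀)`. -/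
def W (n : ℕ) (Φ : Finset (Leaf n) → ℝ) (a₀ : ℕ) : ℝ :=
  ∑ A ∈ Finset.univ.filter (fun A : Finset (Leaf n) => A.card = a₀), Real.exp (-Φ A)

/-- The finite-volume canonical free energy `ω_n^Φ(ε) = 2⁻ⁿ ln W_n^Φ(ε 2ⁿ)` (for a
dyadic `ε ∈ [0,1]` and `n` large, `⌊ε 2ⁿ⌋ = ε 2ⁿ`). -/
def omegaN (n : ℕ) (Φ : Finset (Leaf n) → ℝ) (ε : ℝ) : ℝ :=
  Real.log (W n Φ ⌊ε * 2 ^ n⌋₊) / 2 ^ n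

/-- The expected density `ρ_n^Φ(J)` of the dry set under the PWC measure. -/
def rhoN (n : ℕ) (Φ : Finset (Leaf n) → ℝ) (J : ℝ) : ℝ :=
  (∑ A : Finset (Leaf n), (A.card : ℝ) * Real.exp (J * (A.card : ℝ) - Φ A)) /
    (2 ^ n * Z n Φ J)

/-- A dyadic rational. -/
def IsDyadic (x : ℝ) : Prop := ∃ (k : ℤ) (m : ℕ), x = (k : ℝ) / 2 ^ m

/-- The hypotheses of the general theory (Proposition 1.2): each `Φ_n` (for `n ≥ 1`) is
a monotone, non-negative clustering function, and `Φ_n(A) ≤ Φ_{n-1}(A) + γ_n` for any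
`A` contained in the leaf set of one of the two subtrees of `𝕋⁽ⁿ⁾` rooted at a child of
the root (identified with `𝕋⁽ⁿ⁻¹⁾` by prepending the corresponding letter), where
`γ_n ≥ 0` and `∑ γ_n 2⁻ⁿ < ∞`. -/
structure GoodSeq (Φ : ∀ n, Finset (Fin n → Bool) → ℝ) (γ : ℕ → ℝ) : Prop where
  mono : ∀ n, 1 ≤ n → IsMonotoneClusteringFn (Φ n)
  nonneg : ∀ n, 1 ≤ n → ∀ A, 0 ≤ Φ n A
  gamma_nonneg : ∀ n, 0 ≤ γ n
  gamma_summable : Summable fun n => γ n / 2 ^ n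
  subtree : ∀ (n : ℕ) (b : Bool) (A : Finset (Fin n → Bool)),
    Φ (n + 1) (A.image fun u => Fin.cons b u) ≤ Φ n A + γ (n + 1)

/-- The first order branching clustering function with parameters `(h_k)_{k=0}^n`, `h`. -/
def foPhi (n : ℕ) (hs : ℕ → ℝ) (h : ℝ) (A : Finset (Leaf n)) : ℝ :=
  if A = ∅ then 0 else (∑ k ∈ Finset.range (n + 1), hs k * (bcount A k : ℝ)) + h

/-- The second order branching clustering function with parameters
`(h_{k,ℓ})_{0 ≤ ℓ < k ≤ n+1}`, `h`. -/
def soPhi (n : ℕ) (H : ℕ → ℕ → ℝ) (h : ℝ) (A : Finset (Leaf n)) : ℝ :=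
  if A = ∅ then 0
  else (∑ k ∈ Finset.range (n + 2), ∑ l ∈ Finset.range k, H k l * (b2count A k l : ℝ)) + h

/-- A non-decreasing (infinite) triangular array. -/
def ArrayMono (H : ℕ → ℕ → ℝ) : Prop :=
  ∀ k k' l l' : ℕ, l < k → l' < k' → k ≤ k' → l ≤ l' → H k l ≤ H k' l'

/-- The Dirichlet energy on `𝕋⁽ⁿ⁾` of `f` (vertices encoded as words of length `≤ n`,
read from the root; a vertex of length `m` has age `n - m` and its parent edge has
conductance `C (n - m)`). -/
def energy (n : ℕ) (C : ℕ → ℝ) (f : List Bool → ℝ) : ℝ :=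
  ∑ m ∈ Finset.Icc 1 n, ∑ v : Fin m → Bool,
    C (n - m) * (f (List.ofFn v) - f (List.ofFn v).dropLast) ^ 2

/-- The capacity of a set of leaves `A ⊆ 𝕃₀⁽ⁿ⁾`. -/
def cap (n : ℕ) (C : ℕ → ℝ) (A : Finset (Leaf n)) : ℝ :=
  sInf {x : ℝ | ∃ f : List Bool → ℝ, f [] = 1 ∧ (∀ u ∈ A, f (List.ofFn u) = 0) ∧
    x = energy n C f}

/-! Write `s_k(A)` for the number of ancestors of `A` at age `k`. An ancestor of age `k + 1`
has one or two children among those of age `k`, two exactly when it is a branching point, so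
`b_{k+1} = s_k - s_{k+1}`; with `b_0 = s_0 = |A|` and `s_n = 1`, summation by parts gives, for
`A ≠ ∅`,
  `Φ(A) = 2 h_0 |A| + ∑_{k<n} (h_{k+1} - h_k) s_k(A) + (h - h_n)`,
with nonnegative coefficients. If `A ≺ B` then `|A| = |B|` and `s_k(A) ≤ s_k(B)`, because
`σ⁻¹` induces a surjection from the ancestors of `B` onto those of `A`. Subadditivity follows
from `s_k(A ∪ B) ≤ s_k(A) + s_k(B)`, the constant `h - h_n ≥ 0` being counted once on the left
and twice on the right. Invariance under `∼` is monotonicity applied in both directions. -/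

theorem _root_.Finset.card_image_le_card_image_of_eq_imp_eq {α β γ : Type*} [DecidableEq β]
    [DecidableEq γ] {s : Finset α} {f : α → β} {g : α → γ}
    (h : ∀ x ∈ s, ∀ y ∈ s, g x = g y → f x = f y) :
    (s.image f).card ≤ (s.image g).card := by
  have hpair : (s.image fun x => (g x, f x)).image Prod.snd = s.image f := by
    rw [Finset.image_image]; rfl
  have hfst : (s.image fun x => (g x, f x)).image Prod.fst = s.image g := by
    rw [Finset.image_image]; rfl
  have hinj : Set.InjOn Prod.fst (s.image fun x => (g x, f x) : Set (γ × β)) := by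
    rintro _ hp _ hq hpq
    obtain ⟨x, hx, rfl⟩ := Finset.mem_image.1 hp
    obtain ⟨y, hy, rfl⟩ := Finset.mem_image.1 hq
    exact Prod.ext hpq (h x hx y hy hpq)
  calc (s.image f).card ≤ (s.image fun x => (g x, f x)).card := hpair ▸ Finset.card_image_le
    _ = (s.image g).card := by rw [← hfst, Finset.card_image_of_injOn hinj]

theorem _root_.Finset.card_image_eq_card_image_of_eq_iff_eq {α β γ : Type*} [DecidableEq β]
    [DecidableEq γ] {s : Finset α} {f : α → β} {g : α → γ}
    (h : ∀ x ∈ s, ∀ y ∈ s, f x = f y ↔ g x = g y) :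
    (s.image f).card = (s.image g).card :=
  le_antisymm (Finset.card_image_le_card_image_of_eq_imp_eq fun x hx y hy => (h x hx y hy).2)
    (Finset.card_image_le_card_image_of_eq_imp_eq fun x hx y hy => (h x hx y hy).1)

section Trunc

variable {n : ℕ}

lemma trunc_apply_of_lt {k : ℕ} (u : Leaf n) {i : Fin n} (hi : (i : ℕ) < n - k) :
    trunc k u i = u i :=
  if_pos hi

lemma trunc_zero (u : Leaf n) : trunc 0 u = u := by
  funext i
  exact trunc_apply_of_lt u (by omega)

lemma trunc_self (u : Leaf n) : trunc n u = fun _ => false := by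
  funext i
  simp [trunc]

lemma trunc_eq_trunc_iff_forall {k : ℕ} {u v : Leaf n} :
    trunc k u = trunc k v ↔ ∀ i : Fin n, (i : ℕ) < n - k → u i = v i := by
  refine ⟨fun huv i hi => ?_, fun huv => funext fun i => ?_⟩
  · simpa [trunc_apply_of_lt _ hi] using congrFun huv i
  · by_cases hi : (i : ℕ) < n - k
    · simp [trunc_apply_of_lt _ hi, huv i hi]
    · simp [trunc, hi]

lemma meetAge_le_iff_forall {k : ℕ} {u v : Leaf n} :
    meetAge u v ≤ k ↔ ∀ i : Fin n, (i : ℕ) < n - k → u i = v i := by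
  by_cases huv : u = v
  · simp [meetAge, huv]
  have hne : {i : ℕ | ∃ h : i < n, u ⟨i, h⟩ ≠ v ⟨i, h⟩}.Nonempty := by
    obtain ⟨i, hi⟩ := Function.ne_iff.1 huv
    exact ⟨i, i.isLt, hi⟩
  rw [meetAge, if_neg huv, tsub_le_iff_right, add_comm, ← tsub_le_iff_right,
    le_csInf_iff' hne]
  refine ⟨fun hlow i hi => ?_, fun hall j ⟨hj, hne⟩ => ?_⟩
  · by_contra hne
    exact absurd (hlow ⟨i.isLt, hne⟩) (by omega)
  · by_contra hlt
    exact hne (hall ⟨j, hj⟩ (by simp only; omega))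

lemma trunc_eq_trunc_iff {k : ℕ} {u v : Leaf n} : trunc k u = trunc k v ↔ meetAge u v ≤ k := by
  rw [trunc_eq_trunc_iff_forall, meetAge_le_iff_forall]

lemma meetAge_self (u : Leaf n) : meetAge u u = 0 := by
  simp [meetAge]

end Trunc

section Ancestors

variable {n : ℕ}

def ancestors (A : Finset (Leaf n)) (k : ℕ) : Finset (Leaf n) := A.image (trunc k)

lemma card_ancestors_zero (A : Finset (Leaf n)) : (ancestors A 0).card = A.card := by
  rw [ancestors, funext trunc_zero, Finset.image_id']

lemma card_ancestors_self {A : Finset (Leaf n)} (hA : A.Nonempty) : (ancestors A n).card = 1 := by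
  rw [ancestors, funext trunc_self, Finset.image_const hA, Finset.card_singleton]

lemma ancestors_union (A B : Finset (Leaf n)) (k : ℕ) :
    ancestors (A ∪ B) k = ancestors A k ∪ ancestors B k :=
  Finset.image_union A B

lemma mem_branchPts {A : Finset (Leaf n)} {k : ℕ} {w : Leaf n} :
    w ∈ branchPts A k ↔ ∃ u ∈ A, ∃ v ∈ A, meetAge u v = k ∧ trunc k u = w := by
  simp [branchPts, and_assoc]

lemma bcount_zero (A : Finset (Leaf n)) : bcount A 0 = A.card := by
  have : branchPts A 0 = A := by
    ext w
    rw [mem_branchPts]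
    refine ⟨?_, fun hw => ⟨w, hw, w, hw, meetAge_self w, trunc_zero w⟩⟩
    rintro ⟨u, hu, -, -, -, rfl⟩
    rwa [trunc_zero]
  rw [bcount, this]

lemma meetAge_le_iff_le_succ_and_eq {k : ℕ} {i : Fin n} (hi : (i : ℕ) + (k + 1) = n)
    {u v : Leaf n} : meetAge u v ≤ k ↔ meetAge u v ≤ k + 1 ∧ u i = v i := by
  simp only [meetAge_le_iff_forall]
  refine ⟨fun h => ⟨fun j hj => h j (by omega), h i (by omega)⟩, fun ⟨h, hii⟩ j hj => ?_⟩
  rcases Nat.lt_or_ge j i with hlt | hge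
  · exact h j (by omega)
  · rwa [Fin.ext (by omega : (j : ℕ) = i)]

lemma meetAge_eq_succ_iff {k : ℕ} {i : Fin n} (hi : (i : ℕ) + (k + 1) = n) {u v : Leaf n} :
    meetAge u v = k + 1 ↔ trunc (k + 1) u = trunc (k + 1) v ∧ u i ≠ v i := by
  have hle := meetAge_le_iff_le_succ_and_eq hi (u := u) (v := v)
  rw [trunc_eq_trunc_iff]
  constructor
  · intro h
    exact ⟨h.le, fun hii => absurd (hle.2 ⟨h.le, hii⟩) (by omega)⟩
  · rintro ⟨h, hii⟩
    have : ¬ meetAge u v ≤ k := fun hk => hii (hle.1 hk).2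
    omega

lemma branchPts_succ_eq_inter (A : Finset (Leaf n)) {k : ℕ} {i : Fin n}
    (hi : (i : ℕ) + (k + 1) = n) :
    branchPts A (k + 1) = (A.filter (fun u => u i)).image (trunc (k + 1)) ∩
      (A.filter (fun u => ¬ u i)).image (trunc (k + 1)) := by
  ext w
  simp only [mem_branchPts, Finset.mem_inter, Finset.mem_image, Finset.mem_filter,
    meetAge_eq_succ_iff hi]
  constructor
  · rintro ⟨u, hu, v, hv, ⟨huv, hne⟩, rfl⟩
    cases hui : u i
    · exact ⟨⟨v, ⟨hv, by simpa [hui] using hne.symm⟩, huv.symm⟩, ⟨u, ⟨hu, by simp [hui]⟩, rfl⟩⟩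
    · exact ⟨⟨u, ⟨hu, hui⟩, rfl⟩, ⟨v, ⟨hv, by simpa [hui] using hne.symm⟩, huv.symm⟩⟩
  · rintro ⟨⟨u, ⟨hu, hui⟩, rfl⟩, ⟨v, ⟨hv, hvi⟩, huv⟩⟩
    exact ⟨u, hu, v, hv, ⟨huv.symm, by simp_all⟩, rfl⟩

lemma card_ancestors_eq_add_bcount (A : Finset (Leaf n)) {k : ℕ} (hk : k < n) :
    (ancestors A k).card = (ancestors A (k + 1)).card + bcount A (k + 1) := by
  -- Split `A` by the letter at position `n - (k + 1)`: on each half, `trunc k` and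
  -- `trunc (k + 1)` identify the same leaves, and the two halves' ancestors of age `k + 1`
  -- overlap exactly in the branching points of that age.
  set i : Fin n := ⟨n - (k + 1), by omega⟩
  have hi : (i : ℕ) + (k + 1) = n := by simp only [i]; omega
  have hsplit := Finset.filter_union_filter_not_eq (p := fun u : Leaf n => u i) A
  have hdisj : Disjoint ((A.filter (fun u => u i)).image (trunc k))
      ((A.filter (fun u => ¬ u i)).image (trunc k)) := by
    simp only [Finset.disjoint_left, Finset.mem_image, Finset.mem_filter]
    rintro _ ⟨u, ⟨-, hui⟩, rfl⟩ ⟨v, ⟨-, hvi⟩, huv⟩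
    have := congrFun huv i
    rw [trunc_apply_of_lt _ (by omega), trunc_apply_of_lt _ (by omega)] at this
    simp_all
  have hcard (p : Leaf n → Prop) [DecidablePred p] (hp : ∀ u v, p u → p v → u i = v i) :
      ((A.filter p).image (trunc k)).card = ((A.filter p).image (trunc (k + 1))).card :=
    Finset.card_image_eq_card_image_of_eq_iff_eq fun u hu v hv => by
      rw [trunc_eq_trunc_iff, trunc_eq_trunc_iff, meetAge_le_iff_le_succ_and_eq hi]
      exact and_iff_left (hp u v (Finset.mem_filter.1 hu).2 (Finset.mem_filter.1 hv).2)
  calc (ancestors A k).card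
      = ((A.filter (fun u => u i)).image (trunc k)).card +
          ((A.filter (fun u => ¬ u i)).image (trunc k)).card := by
        rw [ancestors, ← Finset.card_union_of_disjoint hdisj, ← Finset.image_union, hsplit]
    _ = ((A.filter (fun u => u i)).image (trunc (k + 1))).card +
          ((A.filter (fun u => ¬ u i)).image (trunc (k + 1))).card := by
        rw [hcard _ fun u v hu hv => by simp_all, hcard _ fun u v hu hv => by simp_all]
    _ = (ancestors A (k + 1)).card + bcount A (k + 1) := by
        rw [← Finset.card_union_add_card_inter, ← Finset.image_union, hsplit,
          ← branchPts_succ_eq_inter A hi, ancestors, bcount]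

end Ancestors

section Clustering

variable {n : ℕ}

lemma MoreClustered.card_eq {A B : Finset (Leaf n)} (hAB : MoreClustered A B) :
    A.card = B.card := by
  obtain ⟨σ, hσ, -⟩ := hAB
  exact Finset.card_nbij σ hσ.mapsTo hσ.injOn hσ.surjOn

lemma MoreClustered.card_ancestors_le {A B : Finset (Leaf n)} (hAB : MoreClustered A B)
    (k : ℕ) : (ancestors A k).card ≤ (ancestors B k).card := by
  obtain ⟨σ, hσ, hmeet⟩ := hAB
  have hB : B = A.image σ := Finset.coe_injective (by simp [hσ.image_eq])
  rw [ancestors, ancestors, hB, Finset.image_image]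
  refine Finset.card_image_le_card_image_of_eq_imp_eq fun u hu v hv huv => ?_
  rw [Function.comp_apply, Function.comp_apply, trunc_eq_trunc_iff] at huv
  exact trunc_eq_trunc_iff.2 ((hmeet u hu v hv).trans huv)

lemma EquivClustered.moreClustered {A B : Finset (Leaf n)} (hAB : EquivClustered A B) :
    MoreClustered A B :=
  let ⟨σ, hσ, hmeet⟩ := hAB
  ⟨σ, hσ, fun u hu v hv => (hmeet u hu v hv).ge⟩

lemma EquivClustered.symm {A B : Finset (Leaf n)} (hAB : EquivClustered A B) :
    EquivClustered B A := by
  obtain ⟨σ, hσ, hmeet⟩ := hAB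
  have hinv := hσ.invOn_invFunOn
  have hτ := hσ.symm hinv.symm
  refine ⟨Function.invFunOn σ A, hτ, fun u hu v hv => ?_⟩
  conv_rhs => rw [← hinv.2 hu, ← hinv.2 hv]
  exact (hmeet _ (hτ.mapsTo hu) _ (hτ.mapsTo hv)).symm

lemma isClusteringFn_of_le_of_moreClustered {Φ : Finset (Leaf n) → ℝ} (h0 : Φ ∅ = 0)
    (hΦ : ∀ A B, MoreClustered A B → Φ A ≤ Φ B) : IsClusteringFn Φ :=
  ⟨h0, fun A B hAB => (hΦ A B hAB.moreClustered).antisymm (hΦ B A hAB.symm.moreClustered)⟩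

end Clustering

section FirstOrder

variable {n : ℕ} (hs : ℕ → ℝ) (h : ℝ)

lemma sum_range_mul_bcount (A : Finset (Leaf n)) {k : ℕ} (hk : k ≤ n) :
    ∑ j ∈ Finset.range (k + 1), hs j * bcount A j =
      2 * hs 0 * A.card + ∑ j ∈ Finset.range k, (hs (j + 1) - hs j) * (ancestors A j).card
        - hs k * (ancestors A k).card := by
  induction k with
  | zero => simp [bcount_zero, card_ancestors_zero]; ring
  | succ k ih =>
    rw [Finset.sum_range_succ, ih (by omega), Finset.sum_range_succ,
      card_ancestors_eq_add_bcount A (by omega : k < n)]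
    push_cast
    ring

lemma foPhi_eq {A : Finset (Leaf n)} (hA : A.Nonempty) :
    foPhi n hs h A = 2 * hs 0 * A.card +
      ∑ k ∈ Finset.range n, (hs (k + 1) - hs k) * (ancestors A k).card + (h - hs n) := by
  rw [foPhi, if_neg hA.ne_empty, sum_range_mul_bcount hs A le_rfl, card_ancestors_self hA]
  push_cast
  ring

variable {hs}

lemma foPhi_le_of_moreClustered (hmono : ∀ k < n, hs k ≤ hs (k + 1))
    {A B : Finset (Leaf n)} (hAB : MoreClustered A B) : foPhi n hs h A ≤ foPhi n hs h B := by
  rcases A.eq_empty_or_nonempty with rfl | hA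
  · have hB : B = ∅ := Finset.card_eq_zero.1 (hAB.card_eq.symm.trans Finset.card_empty)
    simp [foPhi, hB]
  have hB : B.Nonempty := Finset.card_pos.1 (hAB.card_eq ▸ Finset.card_pos.2 hA)
  rw [foPhi_eq hs h hA, foPhi_eq hs h hB, hAB.card_eq]
  gcongr _ + ∑ k ∈ _, _ * ?_ + _ with k hk
  · exact sub_nonneg.2 (hmono k (Finset.mem_range.1 hk))
  · exact_mod_cast hAB.card_ancestors_le k

lemma foPhi_union_le (hmono : ∀ k < n, hs k ≤ hs (k + 1)) (hh : hs n ≤ h)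
    {A B : Finset (Leaf n)} (hAB : Disjoint A B) :
    foPhi n hs h (A ∪ B) ≤ foPhi n hs h A + foPhi n hs h B := by
  rcases A.eq_empty_or_nonempty with rfl | hA
  · simp [foPhi]
  rcases B.eq_empty_or_nonempty with rfl | hB
  · simp [foPhi]
  rw [foPhi_eq hs h (hA.mono Finset.subset_union_left), foPhi_eq hs h hA, foPhi_eq hs h hB,
    Finset.card_union_of_disjoint hAB]
  have hsum : ∑ k ∈ Finset.range n, (hs (k + 1) - hs k) * ((ancestors (A ∪ B) k).card : ℝ) ≤
      ∑ k ∈ Finset.range n, (hs (k + 1) - hs k) * (ancestors A k).card +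
        ∑ k ∈ Finset.range n, (hs (k + 1) - hs k) * (ancestors B k).card := by
    rw [← Finset.sum_add_distrib]
    gcongr with k hk
    rw [← mul_add]
    gcongr
    · exact sub_nonneg.2 (hmono k (Finset.mem_range.1 hk))
    · exact_mod_cast ancestors_union A B k ▸ Finset.card_union_le _ _
  push_cast
  linarith

end FirstOrder

theorem stmt4_general (n : ℕ) (hs : ℕ → ℝ) (h : ℝ)
    (hmono : ∀ k l : ℕ, k ≤ l → l ≤ n → hs k ≤ hs l) (hh : hs n ≤ h) :
    IsMonotoneClusteringFn (foPhi n hs h) := by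
  have hstep : ∀ k < n, hs k ≤ hs (k + 1) := fun k hk => hmono k (k + 1) k.le_succ hk
  have hle : ∀ A B, MoreClustered A B → foPhi n hs h A ≤ foPhi n hs h B :=
    fun _ _ => foPhi_le_of_moreClustered h hstep
  exact ⟨isClusteringFn_of_le_of_moreClustered (by simp [foPhi]) hle, hle,
    fun _ _ => foPhi_union_le h hstep hh⟩

/-- Proposition 1.11: if `(h_k)_{k=0}^n` is non-decreasing and
`h ≥ h_n`, then the first order branching clustering function with parameters
`(h_k)_{k=0}^n` and `h` is a monotone clustering function. -/
theorem stmt4 (n : ℕ) (hn : 1 ≤ n) (hs : ℕ → ℝ) (h : ℝ)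
    (hmono : ∀ k l : ℕ, k ≤ l → l ≤ n → hs k ≤ hs l) (hh : hs n ≤ h) :
    IsMonotoneClusteringFn (foPhi n hs h) :=
  stmt4_general n hs h hmono hh

end PWC
end
end

section
/- Let (h_k)_{k≥0} be a non-decreasing real sequence with ∑_k 2^{−k} h_k < ∞, and for each n let Φ_n be the first order branching clustering function on 𝕃₀⁽ⁿ⁾ with parameters (h_k)_{k=0}^n and h = h_n. If κ₁ := ∑_{k=1}^∞ 2^k e^{−h_k} < ∞, then the sequence (Φ_n) exhibits a wetting transition, and moreover J* ∈ (2 ln 2 + h₀ − ln κ₁, ∞). -/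
open Filter
open scoped Classical

noncomputable section

namespace PWC

/-!
Write `w_n(A) = exp (J|A| - ∑_{k ≤ n} h_k b_k(A))`. Splitting `A` between the two subtrees of the
root multiplies weights, with an extra factor `e^{-h_{n+1}}` when both halves are nonempty, so the
total weight `g_n` of the nonempty sets obeys `g_{n+1} = 2 g_n + e^{-h_{n+1}} g_n²`, and
`Z_n = 1 + e^{-h_n} g_n`. For non-decreasing `h` this gives `Z_{n+1} ≤ Z_n²`, so `ζ_n` decreases to
`ζ`; and `g_{n+1} ≥ e^{-h_{n+1}} g_n²` gives `ζ(J) ≥ J - O(1)` when `∑ h_k 2^{-k} < ∞`.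

Conversely `1/(x + c x²) ≥ 1/x - c` gives `2ⁿ/g_n ≥ 2/g_1 - ¼ ∑_{k=2}^n 2^k e^{-h_k}`; while the
right side stays positive, `Z_n` is bounded and `ζ(J) = 0`. At `e^{J - h_0} = 4/κ₁` its limit
`2/g_1 - ¼ ∑_{k≥2} 2^k e^{-h_k}` equals `e^{-2h_1}/(κ₁ + 2e^{-h_1}) > 0`, so by continuity `ζ` still
vanishes a little above `2 ln 2 + h_0 - ln κ₁`.
-/

lemma inv_sub_le_inv_add_mul_sq {x c : ℝ} (hx : 0 < x) (hc : 0 ≤ c) :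
    x⁻¹ - c ≤ (x + c * x ^ 2)⁻¹ := by
  have hcx : 0 ≤ c * x := by positivity
  have key : x⁻¹ - (x + c * x ^ 2)⁻¹ = c / (1 + c * x) := by
    field_simp
    ring
  have : c / (1 + c * x) ≤ c := div_le_self hc (by linarith)
  linarith

lemma meetAge_le {n : ℕ} (u v : Leaf n) : meetAge u v ≤ n := by
  unfold meetAge; split <;> omega

lemma meetAge_cons_cons {n : ℕ} (b b' : Bool) (u v : Leaf n) :
    meetAge (Fin.cons b u : Leaf (n + 1)) (Fin.cons b' v) =
      if b = b' then meetAge u v else n + 1 := by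
  set D' := {i : ℕ | ∃ h : i < n + 1,
    (Fin.cons b u : Leaf (n + 1)) ⟨i, h⟩ ≠ (Fin.cons b' v : Leaf (n + 1)) ⟨i, h⟩}
  by_cases hb : b = b'
  · subst hb
    rcases eq_or_ne u v with rfl | huv
    · simp [meetAge]
    have hshift : {m | m + 1 ∈ D'} = {i : ℕ | ∃ h : i < n, u ⟨i, h⟩ ≠ v ⟨i, h⟩} := by
      ext m
      exact ⟨fun ⟨h, hne⟩ => ⟨by omega, hne⟩, fun ⟨h, hne⟩ => ⟨by omega, hne⟩⟩
    have hpos : 1 ≤ sInf D' := by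
      obtain ⟨i, hi⟩ := Function.ne_iff.1 huv
      have hne : D'.Nonempty := ⟨i + 1, Nat.succ_lt_succ i.2, hi⟩
      refine Nat.one_le_iff_ne_zero.2 fun h0 => ?_
      obtain ⟨_, h⟩ := h0 ▸ Nat.sInf_mem hne
      exact h rfl
    have hinf := Nat.sInf_add (p := (· ∈ D')) hpos
    rw [hshift] at hinf
    change _ = sInf D' at hinf
    rw [meetAge, meetAge, if_pos rfl, if_neg huv, if_neg (by simpa using huv)]
    change _ - sInf D' = _
    omega
  · have h0 : sInf D' = 0 := Nat.le_zero.1 (Nat.sInf_le ⟨Nat.succ_pos n, by simpa using hb⟩)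
    rw [meetAge, if_neg fun h => hb (by simpa using congrFun h 0), if_neg hb, h0, Nat.sub_zero]

lemma trunc_cons {n k : ℕ} (hk : k ≤ n) (b : Bool) (u : Leaf n) :
    trunc k (Fin.cons b u : Leaf (n + 1)) = Fin.cons b (trunc k u) := by
  funext i
  refine Fin.cases ?_ (fun j => ?_) i
  · simp only [trunc, Fin.val_zero, Fin.cons_zero]
    rw [if_pos (by omega)]
  · simp only [trunc, Fin.val_succ, Fin.cons_succ]
    congr 1
    simp only [eq_iff_iff]
    omega

def joinSubtrees {n : ℕ} (P Q : Finset (Leaf n)) : Finset (Leaf (n + 1)) :=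
  P.image (Fin.cons false) ∪ Q.image (Fin.cons true)

@[simp]
lemma cons_mem_joinSubtrees {n : ℕ} (b : Bool) (u : Leaf n) (P Q : Finset (Leaf n)) :
    (Fin.cons b u : Leaf (n + 1)) ∈ joinSubtrees P Q ↔ if b then u ∈ Q else u ∈ P := by
  cases b <;> simp [joinSubtrees, Fin.cons_inj]

lemma branchPts_joinSubtrees_of_le {n k : ℕ} (P Q : Finset (Leaf n)) (hk : k ≤ n) :
    branchPts (joinSubtrees P Q) k =
      (branchPts P k).image (Fin.cons false) ∪ (branchPts Q k).image (Fin.cons true) := by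
  ext w
  simp only [branchPts, joinSubtrees, Finset.mem_image, Finset.mem_union, Finset.mem_filter,
    Finset.mem_product, Prod.exists]
  constructor
  · rintro ⟨_, _, ⟨⟨(⟨x, hx, rfl⟩ | ⟨x, hx, rfl⟩), (⟨y, hy, rfl⟩ | ⟨y, hy, rfl⟩)⟩, hxy⟩, rfl⟩ <;>
      simp only [meetAge_cons_cons, trunc_cons hk] at hxy ⊢ <;> grind
  · rintro (⟨_, ⟨x, y, ⟨⟨hx, hy⟩, hxy⟩, rfl⟩, rfl⟩ | ⟨_, ⟨x, y, ⟨⟨hx, hy⟩, hxy⟩, rfl⟩, rfl⟩)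
    · exact ⟨Fin.cons false x, Fin.cons false y, ⟨⟨Or.inl ⟨x, hx, rfl⟩, Or.inl ⟨y, hy, rfl⟩⟩,
        by simpa [meetAge_cons_cons] using hxy⟩, trunc_cons hk _ _⟩
    · exact ⟨Fin.cons true x, Fin.cons true y, ⟨⟨Or.inr ⟨x, hx, rfl⟩, Or.inr ⟨y, hy, rfl⟩⟩,
        by simpa [meetAge_cons_cons] using hxy⟩, trunc_cons hk _ _⟩

lemma branchPts_joinSubtrees_top {n : ℕ} (P Q : Finset (Leaf n)) :
    branchPts (joinSubtrees P Q) (n + 1) =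
      if P.Nonempty ∧ Q.Nonempty then {fun _ => false} else ∅ := by
  have htop : ∀ w : Leaf (n + 1), trunc (n + 1) w = fun _ => false := fun w => by
    funext i; simp [trunc]
  ext w
  simp only [branchPts, joinSubtrees, Finset.mem_image, Finset.mem_union, Finset.mem_filter,
    Finset.mem_product, Prod.exists, htop]
  constructor
  · rintro ⟨_, _, ⟨⟨(⟨x, hx, rfl⟩ | ⟨x, hx, rfl⟩), (⟨y, hy, rfl⟩ | ⟨y, hy, rfl⟩)⟩, hxy⟩, rfl⟩ <;>
      simp only [meetAge_cons_cons] at hxy <;> grind [meetAge_le]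
  · split_ifs with h
    · rw [Finset.mem_singleton]
      rintro rfl
      obtain ⟨⟨x, hx⟩, ⟨y, hy⟩⟩ := h
      exact ⟨Fin.cons false x, Fin.cons true y, ⟨⟨Or.inl ⟨x, hx, rfl⟩, Or.inr ⟨y, hy, rfl⟩⟩,
        by simp [meetAge_cons_cons]⟩, rfl⟩
    · simp

lemma bcount_joinSubtrees_of_le {n k : ℕ} (P Q : Finset (Leaf n)) (hk : k ≤ n) :
    bcount (joinSubtrees P Q) k = bcount P k + bcount Q k := by
  rw [bcount, branchPts_joinSubtrees_of_le P Q hk, Finset.card_union_of_disjoint,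
    Finset.card_image_of_injective _ (Fin.cons_right_injective _),
    Finset.card_image_of_injective _ (Fin.cons_right_injective _), bcount, bcount]
  simp [Finset.disjoint_left, Fin.cons_inj]

lemma bcount_joinSubtrees_top {n : ℕ} (P Q : Finset (Leaf n)) :
    bcount (joinSubtrees P Q) (n + 1) = if P.Nonempty ∧ Q.Nonempty then 1 else 0 := by
  rw [bcount, branchPts_joinSubtrees_top]
  split_ifs <;> rfl

lemma card_joinSubtrees {n : ℕ} (P Q : Finset (Leaf n)) :
    (joinSubtrees P Q).card = P.card + Q.card := by
  rw [joinSubtrees, Finset.card_union_of_disjoint,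
    Finset.card_image_of_injective _ (Fin.cons_right_injective _),
    Finset.card_image_of_injective _ (Fin.cons_right_injective _)]
  simp [Finset.disjoint_left, Fin.cons_inj]

lemma joinSubtrees_bijective (n : ℕ) :
    Function.Bijective fun PQ : Finset (Leaf n) × Finset (Leaf n) => joinSubtrees PQ.1 PQ.2 := by
  refine (Fintype.bijective_iff_injective_and_card _).2 ⟨?_, ?_⟩
  · rintro ⟨P, Q⟩ ⟨P', Q'⟩ h
    have hmem := fun b u => cons_mem_joinSubtrees (n := n) b u P Q
    simp only [h, cons_mem_joinSubtrees] at hmem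
    simp only [Prod.mk.injEq, Finset.ext_iff]
    exact ⟨fun u => (hmem false u).symm, fun u => (hmem true u).symm⟩
  · simp [Fintype.card_finset, pow_succ, pow_mul]

section

variable (hs : ℕ → ℝ) (J : ℝ)

def clusterWeight (n : ℕ) (A : Finset (Leaf n)) : ℝ :=
  Real.exp (J * A.card - ∑ k ∈ Finset.range (n + 1), hs k * bcount A k)

def weightSum (n : ℕ) : ℝ := ∑ A : Finset (Leaf n), clusterWeight hs J n A

lemma clusterWeight_empty (n : ℕ) : clusterWeight hs J n ∅ = 1 := by
  simp [clusterWeight, bcount, branchPts]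

lemma clusterWeight_joinSubtrees (n : ℕ) (P Q : Finset (Leaf n)) :
    clusterWeight hs J (n + 1) (joinSubtrees P Q) =
      clusterWeight hs J n P * clusterWeight hs J n Q *
        if P.Nonempty ∧ Q.Nonempty then Real.exp (-hs (n + 1)) else 1 := by
  have hbranch : ∑ k ∈ Finset.range (n + 2), hs k * (bcount (joinSubtrees P Q) k : ℝ) =
      ∑ k ∈ Finset.range (n + 1), hs k * (bcount P k : ℝ) +
        ∑ k ∈ Finset.range (n + 1), hs k * (bcount Q k : ℝ) +
          if P.Nonempty ∧ Q.Nonempty then hs (n + 1) else 0 := by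
    rw [Finset.sum_range_succ, bcount_joinSubtrees_top, ← Finset.sum_add_distrib]
    congr 1
    · refine Finset.sum_congr rfl fun k hk => ?_
      rw [bcount_joinSubtrees_of_le P Q (Finset.mem_range_succ_iff.1 hk)]
      push_cast; ring
    · split_ifs <;> simp
  simp only [clusterWeight, hbranch, card_joinSubtrees]
  split_ifs
  · rw [← Real.exp_add, ← Real.exp_add]; push_cast; ring_nf
  · rw [← Real.exp_add, mul_one]; push_cast; ring_nf

lemma sum_clusterWeight_sub_indicator (n : ℕ) :
    ∑ P : Finset (Leaf n), (clusterWeight hs J n P - if P = ∅ then 1 else 0) =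
      weightSum hs J n - 1 := by
  rw [Finset.sum_sub_distrib, Finset.sum_ite_eq' Finset.univ ∅, if_pos (Finset.mem_univ _),
    weightSum]

lemma weightSum_succ (n : ℕ) :
    weightSum hs J (n + 1) =
      weightSum hs J n ^ 2 + (Real.exp (-hs (n + 1)) - 1) * (weightSum hs J n - 1) ^ 2 := by
  set w := clusterWeight hs J n
  set w' := fun P : Finset (Leaf n) => w P - if P = ∅ then 1 else 0
  -- `w' P * w' Q` is `w P * w Q` on the pairs that branch at the root (both parts nonempty)
  -- and `0` on the others.
  have hpair : ∀ P Q : Finset (Leaf n), clusterWeight hs J (n + 1) (joinSubtrees P Q) =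
      w P * w Q + (Real.exp (-hs (n + 1)) - 1) * (w' P * w' Q) := by
    intro P Q
    rw [clusterWeight_joinSubtrees]
    simp only [Finset.nonempty_iff_ne_empty, w', w]
    by_cases hP : P = ∅
    · simp [hP, clusterWeight_empty]
    by_cases hQ : Q = ∅
    · simp [hQ, clusterWeight_empty]
    rw [if_pos ⟨hP, hQ⟩, if_neg hP, if_neg hQ]
    ring
  calc weightSum hs J (n + 1)
      = ∑ PQ : Finset (Leaf n) × Finset (Leaf n),
          clusterWeight hs J (n + 1) (joinSubtrees PQ.1 PQ.2) :=
        (Fintype.sum_bijective _ (joinSubtrees_bijective n) _ _ fun _ => rfl).symm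
    _ = (∑ P, w P) * (∑ Q, w Q) + (Real.exp (-hs (n + 1)) - 1) * ((∑ P, w' P) * (∑ Q, w' Q)) := by
        rw [Finset.sum_mul_sum, Finset.sum_mul_sum, Finset.mul_sum]
        simp only [hpair, Fintype.sum_prod_type, Finset.sum_add_distrib, Finset.mul_sum]
    _ = _ := by
        rw [sum_clusterWeight_sub_indicator]
        change weightSum hs J n * weightSum hs J n + _ = _
        ring

lemma weightSum_zero : weightSum hs J 0 = 1 + Real.exp (J - hs 0) := by
  set z : Leaf 0 := default
  have hbranch : bcount ({z} : Finset (Leaf 0)) 0 = 1 := by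
    simp [bcount, branchPts, meetAge]
  have huniv : (Finset.univ : Finset (Finset (Leaf 0))) = {∅, {z}} := by
    ext A
    simpa using A.eq_empty_or_nonempty.imp_right fun h =>
      h.eq_univ.trans (Finset.singleton_eq_univ z).symm
  rw [weightSum, huniv, Finset.sum_pair (Finset.singleton_ne_empty z).symm, clusterWeight_empty,
    clusterWeight, Finset.sum_range_one, hbranch]
  simp

/-- The total `clusterWeight` of the nonempty subsets of the leaves (see `weightSum_eq`). -/
def nonemptyWeight : ℕ → ℝ
  | 0 => Real.exp (J - hs 0)
  | n + 1 => 2 * nonemptyWeight n + Real.exp (-hs (n + 1)) * nonemptyWeight n ^ 2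

lemma weightSum_eq (n : ℕ) : weightSum hs J n = 1 + nonemptyWeight hs J n := by
  induction n with
  | zero => exact weightSum_zero hs J
  | succ n ih => rw [weightSum_succ, ih, nonemptyWeight]; ring

lemma nonemptyWeight_pos (n : ℕ) : 0 < nonemptyWeight hs J n := by
  induction n with
  | zero => exact Real.exp_pos _
  | succ n ih => rw [nonemptyWeight]; positivity

lemma Z_foPhi (n : ℕ) :
    Z n (foPhi n hs (hs n)) J = 1 + Real.exp (-hs n) * nonemptyWeight hs J n := by
  have hterm : ∀ A : Finset (Leaf n), Real.exp (J * A.card - foPhi n hs (hs n) A) =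
      Real.exp (-hs n) * clusterWeight hs J n A + if A = ∅ then 1 - Real.exp (-hs n) else 0 := by
    intro A
    rcases eq_or_ne A ∅ with rfl | hA
    · simp [foPhi, clusterWeight_empty]
    · rw [foPhi, if_neg hA, if_neg hA, clusterWeight, ← Real.exp_add, add_zero]
      ring_nf
  rw [Z, Finset.sum_congr rfl fun A _ => hterm A, Finset.sum_add_distrib, ← Finset.mul_sum,
    Finset.sum_ite_eq' Finset.univ ∅, if_pos (Finset.mem_univ _), ← weightSum, weightSum_eq]
  ring

lemma one_le_Z_foPhi (n : ℕ) : 1 ≤ Z n (foPhi n hs (hs n)) J := by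
  rw [Z_foPhi]
  have := nonemptyWeight_pos hs J n
  have := Real.exp_pos (-hs n)
  nlinarith

lemma zetaN_foPhi_nonneg (n : ℕ) : 0 ≤ zetaN n (foPhi n hs (hs n)) J :=
  div_nonneg (Real.log_nonneg (one_le_Z_foPhi hs J n)) (by positivity)

lemma Z_foPhi_succ_le_sq (hmono : Monotone hs) (n : ℕ) :
    Z (n + 1) (foPhi (n + 1) hs (hs (n + 1))) J ≤ Z n (foPhi n hs (hs n)) J ^ 2 := by
  have hg := nonemptyWeight_pos hs J n
  have hexp : Real.exp (-hs (n + 1)) ≤ Real.exp (-hs n) :=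
    Real.exp_le_exp.2 (neg_le_neg (hmono n.le_succ))
  calc Z (n + 1) (foPhi (n + 1) hs (hs (n + 1))) J
      = (1 + Real.exp (-hs (n + 1)) * nonemptyWeight hs J n) ^ 2 := by
        rw [Z_foPhi, nonemptyWeight]; ring
    _ ≤ (1 + Real.exp (-hs n) * nonemptyWeight hs J n) ^ 2 := by gcongr
    _ = Z n (foPhi n hs (hs n)) J ^ 2 := by rw [Z_foPhi]

lemma zetaN_foPhi_antitone (hmono : Monotone hs) :
    Antitone fun n => zetaN n (foPhi n hs (hs n)) J := by
  refine antitone_nat_of_succ_le fun n => ?_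
  have hlog : Real.log (Z (n + 1) (foPhi (n + 1) hs (hs (n + 1))) J) ≤
      2 * Real.log (Z n (foPhi n hs (hs n)) J) := by
    calc _ ≤ Real.log (Z n (foPhi n hs (hs n)) J ^ 2) :=
          Real.log_le_log (by linarith [one_le_Z_foPhi hs J (n + 1)])
            (Z_foPhi_succ_le_sq hs J hmono n)
      _ = _ := by rw [Real.log_pow]; push_cast; ring
  simp only [zetaN, pow_succ]
  rw [div_le_div_iff₀ (by positivity) (by positivity)]
  nlinarith [pow_pos (two_pos : (0 : ℝ) < 2) n]

def freeEnergy : ℝ := ⨅ n, zetaN n (foPhi n hs (hs n)) J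

lemma tendsto_zetaN_freeEnergy (hmono : Monotone hs) :
    Tendsto (fun n => zetaN n (foPhi n hs (hs n)) J) atTop (nhds (freeEnergy hs J)) :=
  tendsto_atTop_ciInf (zetaN_foPhi_antitone hs J hmono)
    ⟨0, by rintro _ ⟨n, rfl⟩; exact zetaN_foPhi_nonneg hs J n⟩

lemma sub_sum_le_log_nonemptyWeight (n : ℕ) :
    J - ∑ k ∈ Finset.range (n + 1), hs k / 2 ^ k ≤ Real.log (nonemptyWeight hs J n) / 2 ^ n := by
  induction n with
  | zero => simp [nonemptyWeight]
  | succ n ih =>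
    have hg := nonemptyWeight_pos hs J n
    have hstep : 2 * Real.log (nonemptyWeight hs J n) - hs (n + 1) ≤
        Real.log (nonemptyWeight hs J (n + 1)) := by
      calc 2 * Real.log (nonemptyWeight hs J n) - hs (n + 1)
          = Real.log (Real.exp (-hs (n + 1)) * nonemptyWeight hs J n ^ 2) := by
            rw [Real.log_mul (Real.exp_pos _).ne' (by positivity), Real.log_exp, Real.log_pow]
            push_cast; ring
        _ ≤ Real.log (nonemptyWeight hs J (n + 1)) := by
            refine Real.log_le_log (by positivity) ?_
            rw [nonemptyWeight]; linarith
    rw [Finset.sum_range_succ]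
    have hsplit : (2 * Real.log (nonemptyWeight hs J n) - hs (n + 1)) / 2 ^ (n + 1) =
        Real.log (nonemptyWeight hs J n) / 2 ^ n - hs (n + 1) / 2 ^ (n + 1) := by
      field_simp; ring
    have hdiv := div_le_div_of_nonneg_right hstep (by positivity : (0 : ℝ) ≤ 2 ^ (n + 1))
    linarith

lemma exists_sub_le_freeEnergy (hsum : Summable fun k => hs k / 2 ^ k) :
    ∃ B, ∀ J, J - B ≤ freeEnergy hs J := by
  have hconv : Tendsto (fun n => ∑ k ∈ Finset.range (n + 1), hs k / 2 ^ k + hs n / 2 ^ n)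
      atTop (nhds (∑' k, hs k / 2 ^ k + 0)) :=
    (hsum.hasSum.tendsto_sum_nat.comp (tendsto_add_atTop_nat 1)).add hsum.tendsto_atTop_zero
  obtain ⟨B, hB⟩ := hconv.bddAbove_range
  refine ⟨B, fun J => le_ciInf fun n => ?_⟩
  have hg := nonemptyWeight_pos hs J n
  have hZ : Real.log (Real.exp (-hs n) * nonemptyWeight hs J n) ≤
      Real.log (Z n (foPhi n hs (hs n)) J) :=
    Real.log_le_log (by positivity) (by rw [Z_foPhi]; linarith)
  rw [Real.log_mul (Real.exp_pos _).ne' hg.ne', Real.log_exp] at hZ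
  have h2 : (0 : ℝ) < 2 ^ n := by positivity
  have hsplit : (-hs n + Real.log (nonemptyWeight hs J n)) / 2 ^ n =
      Real.log (nonemptyWeight hs J n) / 2 ^ n - hs n / 2 ^ n := by ring
  have hdiv := div_le_div_of_nonneg_right hZ h2.le
  have hlog := sub_sum_le_log_nonemptyWeight hs J n
  have hBn := hB ⟨n, rfl⟩
  simp only [zetaN]
  linarith

lemma sub_sum_le_two_pow_div_nonemptyWeight (n : ℕ) :
    2 / nonemptyWeight hs J 1 -
        (∑ k ∈ Finset.range n, 2 ^ (k + 2) * Real.exp (-hs (k + 2))) / 4 ≤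
      2 ^ (n + 1) / nonemptyWeight hs J (n + 1) := by
  induction n with
  | zero => simp
  | succ n ih =>
    have hg := nonemptyWeight_pos hs J (n + 1)
    have hstep := inv_sub_le_inv_add_mul_sq (x := 2 * nonemptyWeight hs J (n + 1))
      (c := Real.exp (-hs (n + 2)) / 4) (by positivity) (by positivity)
    have hrec : nonemptyWeight hs J (n + 2) = 2 * nonemptyWeight hs J (n + 1) +
        Real.exp (-hs (n + 2)) / 4 * (2 * nonemptyWeight hs J (n + 1)) ^ 2 := by
      rw [nonemptyWeight]; ring
    rw [← hrec] at hstep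
    have hmul := mul_le_mul_of_nonneg_left hstep (by positivity : (0 : ℝ) ≤ 2 ^ (n + 2))
    rw [Finset.sum_range_succ]
    have e1 : (2 : ℝ) ^ (n + 2) * ((2 * nonemptyWeight hs J (n + 1))⁻¹ -
        Real.exp (-hs (n + 2)) / 4) = 2 ^ (n + 1) / nonemptyWeight hs J (n + 1) -
          2 ^ (n + 2) * Real.exp (-hs (n + 2)) / 4 := by
      field_simp; ring
    rw [e1, ← div_eq_mul_inv] at hmul
    linarith

lemma freeEnergy_nonpos_of_lt
    (hκ : Summable fun k : ℕ => (2 : ℝ) ^ (k + 1) * Real.exp (-hs (k + 1)))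
    (hJ : (∑' k : ℕ, (2 : ℝ) ^ (k + 2) * Real.exp (-hs (k + 2))) / 4 <
      2 / nonemptyWeight hs J 1) :
    freeEnergy hs J ≤ 0 := by
  set κ := ∑' k : ℕ, (2 : ℝ) ^ (k + 1) * Real.exp (-hs (k + 1))
  set ν := 2 / nonemptyWeight hs J 1 -
    (∑' k : ℕ, (2 : ℝ) ^ (k + 2) * Real.exp (-hs (k + 2))) / 4 with hνdef
  have hν : 0 < ν := sub_pos.2 hJ
  have htail : Summable fun k : ℕ => (2 : ℝ) ^ (k + 2) * Real.exp (-hs (k + 2)) :=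
    (summable_nat_add_iff 1).2 hκ
  have hZ : ∀ n, Z (n + 1) (foPhi (n + 1) hs (hs (n + 1))) J ≤ 1 + κ / ν := by
    intro n
    have hg := nonemptyWeight_pos hs J (n + 1)
    have hsum : ∑ k ∈ Finset.range n, (2 : ℝ) ^ (k + 2) * Real.exp (-hs (k + 2)) ≤
        ∑' k : ℕ, (2 : ℝ) ^ (k + 2) * Real.exp (-hs (k + 2)) :=
      htail.sum_le_tsum _ fun _ _ => by positivity
    have hνg : ν * nonemptyWeight hs J (n + 1) ≤ 2 ^ (n + 1) := by
      have hpartial := sub_sum_le_two_pow_div_nonemptyWeight hs J n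
      rw [le_div_iff₀ hg] at hpartial
      refine le_trans (mul_le_mul_of_nonneg_right ?_ hg.le) hpartial
      linarith
    have hterm : (2 : ℝ) ^ (n + 1) * Real.exp (-hs (n + 1)) ≤ κ :=
      hκ.le_tsum n fun _ _ => by positivity
    rw [Z_foPhi, add_le_add_iff_left, le_div_iff₀ hν]
    calc Real.exp (-hs (n + 1)) * nonemptyWeight hs J (n + 1) * ν
        = Real.exp (-hs (n + 1)) * (ν * nonemptyWeight hs J (n + 1)) := by ring
      _ ≤ Real.exp (-hs (n + 1)) * 2 ^ (n + 1) := by gcongr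
      _ ≤ κ := by linarith
  have hC : Tendsto (fun n : ℕ => Real.log (1 + κ / ν) / 2 ^ (n + 1)) atTop (nhds 0) :=
    tendsto_const_nhds.div_atTop
      ((tendsto_pow_atTop_atTop_of_one_lt one_lt_two).comp (tendsto_add_atTop_nat 1))
  refine ge_of_tendsto hC (Eventually.of_forall fun n => ?_)
  calc freeEnergy hs J ≤ zetaN (n + 1) (foPhi (n + 1) hs (hs (n + 1))) J :=
        ciInf_le ⟨0, by rintro _ ⟨m, rfl⟩; exact zetaN_foPhi_nonneg hs J m⟩ _
    _ ≤ Real.log (1 + κ / ν) / 2 ^ (n + 1) :=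
        div_le_div_of_nonneg_right
          (Real.log_le_log (by linarith [one_le_Z_foPhi hs J (n + 1)]) (hZ n)) (by positivity)

lemma nonemptyWeight_monotone (n : ℕ) : Monotone fun J => nonemptyWeight hs J n := by
  intro J J' hJ
  induction n with
  | zero => exact Real.exp_le_exp.2 (by linarith)
  | succ n ih =>
    have := nonemptyWeight_pos hs J n
    simp only [nonemptyWeight]
    gcongr

lemma continuous_nonemptyWeight (n : ℕ) : Continuous fun J => nonemptyWeight hs J n := by
  induction n with
  | zero => simp only [nonemptyWeight]; fun_prop
  | succ n ih => simp only [nonemptyWeight]; fun_prop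

lemma exists_gt_forall_le_freeEnergy_nonpos
    (hκ : Summable fun k : ℕ => (2 : ℝ) ^ (k + 1) * Real.exp (-hs (k + 1))) :
    ∃ Jbar, 2 * Real.log 2 + hs 0 -
        Real.log (∑' k : ℕ, (2 : ℝ) ^ (k + 1) * Real.exp (-hs (k + 1))) < Jbar ∧
      ∀ J ≤ Jbar, freeEnergy hs J ≤ 0 := by
  set κ := ∑' k : ℕ, (2 : ℝ) ^ (k + 1) * Real.exp (-hs (k + 1))
  set τ := ∑' k : ℕ, (2 : ℝ) ^ (k + 2) * Real.exp (-hs (k + 2))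
  set c := Real.exp (-hs 1)
  have hκτ : κ = 2 * c + τ := by
    simp only [κ, τ, c]
    rw [hκ.tsum_eq_zero_add]
    norm_num
  have hτ : 0 ≤ τ := tsum_nonneg fun _ => by positivity
  have hκpos : 0 < κ := by have := Real.exp_pos (-hs 1); linarith
  set J₀ := hs 0 + Real.log (4 / κ) with hJ₀def
  have hJ₀ : 2 * Real.log 2 + hs 0 - Real.log κ = J₀ := by
    rw [hJ₀def, Real.log_div (by norm_num) hκpos.ne', show (4 : ℝ) = 2 ^ 2 by norm_num,
      Real.log_pow]
    push_cast; ring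
  have hmargin : τ / 4 < 2 / nonemptyWeight hs J₀ 1 := by
    have hg : nonemptyWeight hs J₀ 1 = 8 * (κ + 2 * c) / κ ^ 2 := by
      simp only [nonemptyWeight, J₀, add_sub_cancel_left, Real.exp_log (by positivity : 0 < 4 / κ)]
      field_simp; ring
    rw [hg, div_div_eq_mul_div, lt_div_iff₀ (by positivity)]
    have hc := Real.exp_pos (-hs 1)
    nlinarith
  have hcont : ContinuousAt (fun J => 2 / nonemptyWeight hs J 1) J₀ :=
    continuousAt_const.div (continuous_nonemptyWeight hs 1).continuousAt
      (nonemptyWeight_pos hs J₀ 1).ne'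
  obtain ⟨Jbar, hJbar, hJ₀Jbar⟩ :=
    ((hcont.eventually (lt_mem_nhds hmargin)).and_frequently (frequently_gt_nhds J₀)).exists
  refine ⟨Jbar, hJ₀ ▸ hJ₀Jbar, fun J hJ => freeEnergy_nonpos_of_lt hs J hκ ?_⟩
  exact hJbar.trans_le (div_le_div_of_nonneg_left zero_le_two (nonemptyWeight_pos hs J 1)
    (nonemptyWeight_monotone hs 1 hJ))

end

/-- Proposition 1.13: for non-decreasing `(h_k)` with
`∑ 2⁻ᵏ h_k < ∞` and first order branching clustering functions `Φ_n`, if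
`κ₁ = ∑_{k≥1} 2ᵏ e^{-h_k} < ∞` then there is a wetting transition, with
`J* ∈ (2 ln 2 + h₀ - ln κ₁, ∞)`. -/
theorem stmt7 (hs : ℕ → ℝ) (hmono : Monotone hs)
    (hsum : Summable fun k : ℕ => hs k / 2 ^ k)
    (hκ : Summable fun k : ℕ => (2 : ℝ) ^ (k + 1) * Real.exp (-hs (k + 1))) :
    ∃ ζ : ℝ → ℝ,
      (∀ J : ℝ, Tendsto (fun n => zetaN n (foPhi n hs (hs n)) J) atTop (nhds (ζ J))) ∧
      ∃ Js : ℝ, IsGLB {J : ℝ | 0 < ζ J} Js ∧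
        2 * Real.log 2 + hs 0 -
          Real.log (∑' k : ℕ, (2 : ℝ) ^ (k + 1) * Real.exp (-hs (k + 1))) < Js := by
  obtain ⟨B, hB⟩ := exists_sub_le_freeEnergy hs hsum
  obtain ⟨Jbar, hlt, hvanish⟩ := exists_gt_forall_le_freeEnergy_nonpos hs hκ
  set S := {J : ℝ | 0 < freeEnergy hs J}
  have hS : B + 1 ∈ S := by
    show 0 < freeEnergy hs (B + 1)
    linarith [hB (B + 1)]
  have hlower : Jbar ∈ lowerBounds S := fun J hJ =>
    le_of_not_gt fun h => (hvanish J h.le).not_gt hJ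
  exact ⟨freeEnergy hs, fun J => tendsto_zetaN_freeEnergy hs J hmono, sInf S,
    isGLB_csInf ⟨_, hS⟩ ⟨_, hlower⟩, hlt.trans_le (le_csInf ⟨_, hS⟩ hlower)⟩

end PWC
end
end
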